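/- arXiv:2110.00419 — 2 statements merged into one kernel-verified Lean document; each statement's English description precedes it below -/
import Mathlib

section
/- Assume dim_ℂ W ≥ 2. Then A_k = 0 for every k > 2n; that is, Sym^k(W) = I ∩ Sym^k(W) for all k > 2n. -/
open MvPolynomial

/-- The image of `w ∈ W` in the symmetric algebra of `W`, modelled as the
polynomial algebra on a basis `b` of `W`: the linear polynomial `∑ᵢ wᵢ Xᵢ`. -/
noncomputable def polyOf {W ι : Type*} [AddCommGroup W] [Module ℂ W] [Fintype ι]
    (b : Module.Basis ι ℂ W) (w : W) : MvPolynomial ι ℂ :=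
  ∑ i, b.repr w i • X i

/-- The ideal `I ⊆ Sym(W)` generated by the powers `w^{n+1}` for `w ∈ W`
isotropic with respect to the bilinear form `B`. -/
noncomputable def isoIdeal {W ι : Type*} [AddCommGroup W] [Module ℂ W] [Fintype ι]
    (b : Module.Basis ι ℂ W) (B : W →ₗ[ℂ] W →ₗ[ℂ] ℂ) (n : ℕ) : Ideal (MvPolynomial ι ℂ) :=
  Ideal.span {p | ∃ w : W, B w w = 0 ∧ p = polyOf b w ^ (n + 1)}

/-- The degree-`k` graded piece `A_k` of `A = Sym(W)/I`: the image of
`Sym^k(W)` under the quotient map. -/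
noncomputable def gradedPiece {W ι : Type*} [AddCommGroup W] [Module ℂ W] [Fintype ι]
    (b : Module.Basis ι ℂ W) (B : W →ₗ[ℂ] W →ₗ[ℂ] ℂ) (n k : ℕ) :
    Submodule ℂ (MvPolynomial ι ℂ ⧸ isoIdeal b B n) :=
  (homogeneousSubmodule ι ℂ k).map (Ideal.Quotient.mkₐ ℂ (isoIdeal b B n)).toLinearMap

/-!
Over `ℂ`, if `dim W ≥ 2` and `B` is nondegenerate, every vector is a sum `u + v` of two isotropic
vectors, and every term of the binomial expansion of `(u + v)^(2n+1)` contains `u^(n+1)` or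
`v^(n+1)`; so `I` contains the `(2n+1)`-st power of every linear form. Polarization (the
coefficient of `t` in `(x + t y)^(N+1)` is `(N+1) y x^N`) upgrades this to all products of
`2n+1` linear forms, hence to all monomials of degree `> 2n`.
-/

theorem Submodule.mem_of_forall_sum_pow_smul_mem {K M : Type*} [Field K] [Infinite K]
    [AddCommGroup M] [Module K M] (p : Submodule K M) {v : ℕ → M} {N k : ℕ}
    (h : ∀ t : K, ∑ i ∈ Finset.range N, t ^ i • v i ∈ p) (hk : k < N) : v k ∈ p := by
  rw [← p.ker_mkQ, LinearMap.mem_ker, ← Module.forall_dual_apply_eq_zero_iff K]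
  intro φ
  have hP : ∑ i ∈ Finset.range N, Polynomial.C ((φ ∘ₗ p.mkQ) (v i)) * Polynomial.X ^ i = 0 :=
    Polynomial.funext fun t => by
      have hzero : (φ ∘ₗ p.mkQ) (∑ i ∈ Finset.range N, t ^ i • v i) = 0 := by
        rw [LinearMap.comp_apply, p.mkQ_apply, (Submodule.Quotient.mk_eq_zero p).mpr (h t),
          map_zero]
      rw [map_sum] at hzero
      simp only [map_smul, smul_eq_mul] at hzero
      rw [Polynomial.eval_finsetSum, Polynomial.eval_zero, ← hzero]
      refine Finset.sum_congr rfl fun i _ => ?_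
      rw [Polynomial.eval_mul, Polynomial.eval_C, Polynomial.eval_X_pow, mul_comm]
  simpa [Polynomial.finsetSum_coeff, Polynomial.coeff_C_mul_X_pow, hk] using
    congrArg (Polynomial.coeff · k) hP

section Polarization

variable {K R : Type*} [Field K] [CharZero K] [CommRing R] [Algebra K R]

theorem Ideal.mul_pow_mul_mem_of_forall_add_smul_pow_mul_mem (J : Ideal R) {x y r : R} {N : ℕ}
    (h : ∀ t : K, (x + t • y) ^ (N + 1) * r ∈ J) : y * x ^ N * r ∈ J := by
  have hexpand : ∀ t : K, ∑ i ∈ Finset.range (N + 2),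
      t ^ i • (y ^ i * x ^ (N + 1 - i) * ((N + 1).choose i : R) * r) ∈ J.restrictScalars K := by
    intro t
    rw [Submodule.restrictScalars_mem]
    convert h t using 1
    rw [add_comm x, add_pow, Finset.sum_mul]
    refine Finset.sum_congr rfl fun i _ => ?_
    rw [smul_pow, smul_mul_assoc, smul_mul_assoc, smul_mul_assoc]
  have hcoeff : ((N + 1 : ℕ) : K) • (y * x ^ N * r) ∈ J.restrictScalars K := by
    convert (J.restrictScalars K).mem_of_forall_sum_pow_smul_mem hexpand (k := 1) (by omega)
      using 1
    rw [Nat.cast_smul_eq_nsmul, nsmul_eq_mul, Nat.choose_one_right, Nat.add_sub_cancel]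
    ring
  exact ((J.restrictScalars K).smul_mem_iff (Nat.cast_ne_zero.mpr N.succ_ne_zero)).mp hcoeff

theorem Submodule.pow_le_of_forall_pow_mem (J : Ideal R) (V : Submodule K R) {m : ℕ}
    (hV : ∀ x ∈ V, x ^ m ∈ J) : V ^ m ≤ J.restrictScalars K := by
  suffices h : ∀ j ≤ m, ∀ x ∈ V, ∀ r ∈ V ^ j, x ^ (m - j) * r ∈ J by
    intro r hr
    simpa using h m le_rfl 0 V.zero_mem r hr
  intro j
  induction j with
  | zero =>
    intro _ x hx r hr
    obtain ⟨c, rfl⟩ := Submodule.mem_one.mp hr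
    rw [Algebra.algebraMap_eq_smul_one, mul_smul_one]
    exact (J.restrictScalars K).smul_mem c (hV x hx)
  | succ j ih =>
    intro hj x hx r hr
    rw [pow_succ'] at hr
    refine Submodule.mul_induction_on hr (fun y hy s hs => ?_) fun s₁ s₂ h₁ h₂ => ?_
    · have hpolar : y * x ^ (m - (j + 1)) * s ∈ J :=
        J.mul_pow_mul_mem_of_forall_add_smul_pow_mul_mem fun t : K => by
          rw [show m - (j + 1) + 1 = m - j by omega]
          exact ih (by omega) _ (V.add_mem hx (V.smul_mem t hy)) s hs
      simpa only [mul_left_comm, mul_assoc] using hpolar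
    · simpa [mul_add] using J.add_mem h₁ h₂

end Polarization

section Isotropic

variable {K W : Type*} [Field K] [AddCommGroup W] [Module K W] {B : W →ₗ[K] W →ₗ[K] K}

theorem exists_orthogonal_anisotropic [NeZero (2 : K)] (hsymm : ∀ x y : W, B x y = B y x)
    (hnd : ∀ x : W, (∀ y : W, B x y = 0) → x = 0) (hdim : 2 ≤ Module.finrank K W)
    {w : W} (hw : B w w ≠ 0) : ∃ z, B w z = 0 ∧ B z z ≠ 0 := by
  have : FiniteDimensional K W := Module.finite_of_finrank_pos (by omega)
  obtain ⟨z, hwz, hz⟩ : ∃ z, B w z = 0 ∧ z ≠ 0 := by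
    have hker : LinearMap.ker (B w) ≠ ⊥ := fun h => by
      have := LinearMap.finrank_le_finrank_of_injective (LinearMap.ker_eq_bot.mp h)
      rw [Module.finrank_self] at this
      omega
    exact Submodule.exists_mem_ne_zero_of_ne_bot hker
  obtain ⟨y, hy⟩ : ∃ y, B z y ≠ 0 := by
    by_contra! h
    exact hz (hnd z h)
  set y' := y - (B w y / B w w) • w
  have hwy' : B w y' = 0 := by simp [y', hw]
  have hzy' : B z y' ≠ 0 := by simpa [y', hsymm z w, hwz] using hy
  -- `B (z + y') (z + y') = B z z + 2 B z y' + B y' y'`, so one of `z`, `y'`, `z + y'` will do.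
  by_cases hzz : B z z = 0
  · by_cases hy'y' : B y' y' = 0
    · refine ⟨z + y', by simp [hwz, hwy'], ?_⟩
      simpa [hzz, hy'y', hsymm y' z, ← two_mul, two_ne_zero] using hzy'
    · exact ⟨y', hwy', hy'y'⟩
  · exact ⟨z, hwz, hzz⟩

theorem exists_isotropic_add_eq [IsAlgClosed K] [NeZero (2 : K)]
    (hsymm : ∀ x y : W, B x y = B y x) (hnd : ∀ x : W, (∀ y : W, B x y = 0) → x = 0)
    (hdim : 2 ≤ Module.finrank K W) (w : W) : ∃ u v, B u u = 0 ∧ B v v = 0 ∧ u + v = w := by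
  by_cases hw : B w w = 0
  · exact ⟨w, 0, hw, by simp, add_zero w⟩
  obtain ⟨z, hwz, hz⟩ := exists_orthogonal_anisotropic hsymm hnd hdim hw
  obtain ⟨c, hc⟩ := IsAlgClosed.exists_pow_nat_eq (-(2⁻¹ * (2⁻¹ * B w w)) / B z z) two_pos
  have hzw : B z w = 0 := hsymm z w ▸ hwz
  have hcz : c ^ 2 * B z z = -(2⁻¹ * (2⁻¹ * B w w)) := by rw [hc, div_mul_cancel₀ _ hz]
  have h2 : (2 : K)⁻¹ * 2 = 1 := inv_mul_cancel₀ two_ne_zero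
  refine ⟨(2⁻¹ : K) • w + c • z, (2⁻¹ : K) • w - c • z, ?_, ?_,
    by linear_combination (norm := module) h2 • w⟩ <;>
  · simp only [map_add, map_sub, map_smul, LinearMap.add_apply, LinearMap.sub_apply,
      LinearMap.smul_apply, smul_eq_mul, hwz, hzw]
    linear_combination hcz

end Isotropic

section IsoIdeal

variable {W ι : Type*} [AddCommGroup W] [Module ℂ W] [Fintype ι] (b : Module.Basis ι ℂ W)

theorem polyOf_add (u v : W) : polyOf b (u + v) = polyOf b u + polyOf b v := by
  simp [polyOf, add_smul, Finset.sum_add_distrib]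

theorem exists_polyOf_eq {p : MvPolynomial ι ℂ} (hp : p ∈ homogeneousSubmodule ι ℂ 1) :
    ∃ w, polyOf b w = p := by
  rw [homogeneousSubmodule_one_eq_span_X, ← Fintype.range_linearCombination] at hp
  obtain ⟨c, rfl⟩ := hp
  exact ⟨b.equivFun.symm c, by
    simp only [polyOf, ← b.equivFun_apply, b.equivFun.apply_symm_apply,
      Fintype.linearCombination_apply]⟩

variable {B : W →ₗ[ℂ] W →ₗ[ℂ] ℂ} (hsymm : ∀ x y : W, B x y = B y x)
  (hnd : ∀ x : W, (∀ y : W, B x y = 0) → x = 0) (hdim : 2 ≤ Module.finrank ℂ W)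
include hsymm hnd hdim

theorem polyOf_pow_mem_isoIdeal (n : ℕ) (w : W) : polyOf b w ^ (2 * n + 1) ∈ isoIdeal b B n := by
  obtain ⟨u, v, hu, hv, rfl⟩ := exists_isotropic_add_eq hsymm hnd hdim w
  rw [polyOf_add]
  exact Ideal.add_pow_mem_of_pow_mem_of_le _ (Ideal.subset_span ⟨u, hu, rfl⟩)
    (Ideal.subset_span ⟨v, hv, rfl⟩) (by omega)

theorem homogeneousSubmodule_le_isoIdeal {n k : ℕ} (hk : 2 * n < k) :
    homogeneousSubmodule ι ℂ k ≤ (isoIdeal b B n).restrictScalars ℂ := by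
  have hpow : homogeneousSubmodule ι ℂ 1 ^ (2 * n + 1) ≤ (isoIdeal b B n).restrictScalars ℂ :=
    Submodule.pow_le_of_forall_pow_mem _ _ fun x hx => by
      obtain ⟨w, rfl⟩ := exists_polyOf_eq b hx
      exact polyOf_pow_mem_isoIdeal b hsymm hnd hdim n w
  rw [← homogeneousSubmodule_one_pow, ← Nat.add_sub_cancel' hk, pow_add]
  exact Submodule.mul_le.mpr fun p hp q _ => Ideal.mul_mem_right _ _ (hpow hp)

end IsoIdeal

theorem gradedPiece_vanishes_above_top_general
    {W ι : Type*} [AddCommGroup W] [Module ℂ W] [Fintype ι]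
    (b : Module.Basis ι ℂ W) (B : W →ₗ[ℂ] W →ₗ[ℂ] ℂ)
    (hsymm : ∀ x y : W, B x y = B y x)
    (hnd : ∀ x : W, (∀ y : W, B x y = 0) → x = 0)
    (hdim : 2 ≤ Module.finrank ℂ W)
    (n : ℕ) :
    ∀ k : ℕ, 2 * n < k →
      gradedPiece b B n k = ⊥ ∧
      ∀ p ∈ homogeneousSubmodule ι ℂ k, p ∈ isoIdeal b B n := by
  intro k hk
  have hle := homogeneousSubmodule_le_isoIdeal b hsymm hnd hdim hk
  refine ⟨?_, fun p hp => hle hp⟩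
  rw [gradedPiece, eq_bot_iff, Submodule.map_le_iff_le_comap]
  intro p hp
  simpa [Ideal.Quotient.eq_zero_iff_mem] using hle hp

/-- If `dim W ≥ 2`, then `A_k = 0` for every `k > 2n`; that is, every
homogeneous polynomial of degree `k > 2n` lies in the ideal `I`. -/
theorem gradedPiece_vanishes_above_top
    {W ι : Type*} [AddCommGroup W] [Module ℂ W] [Fintype ι]
    (b : Module.Basis ι ℂ W) (B : W →ₗ[ℂ] W →ₗ[ℂ] ℂ)
    (hsymm : ∀ x y : W, B x y = B y x)
    (hnd : ∀ x : W, (∀ y : W, B x y = 0) → x = 0)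
    (hdim : 2 ≤ Module.finrank ℂ W)
    (n : ℕ) (hn : 1 ≤ n) :
    ∀ k : ℕ, 2 * n < k →
      gradedPiece b B n k = ⊥ ∧
      ∀ p ∈ homogeneousSubmodule ι ℂ k, p ∈ isoIdeal b B n :=
  gradedPiece_vanishes_above_top_general b B hsymm hnd hdim n
end

section
/- Triangular decomposition of the universal enveloping algebra: let g be a Lie algebra over a field F of characteristic 0, and suppose g = g₊ ⊕ g₀ ⊕ g₋ is a direct sum decomposition of vector spaces in which g₊, g₀, g₋ are Lie subalgebras of g. Then U(g) = U(g₊) · U(g₀) · U(g₋); that is, U(g) is spanned as an F-vector space by the products a·b·c where a, b, c lie in the images of the canonical algebra homomorphisms U(g₊) → U(g), U(g₀) → U(g), U(g₋) → U(g) induced by the inclusions. -/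
attribute [local instance 100] LieRing.ofAssociativeRing

/-- The algebra homomorphism `U(k) → U(g)` induced by the inclusion of a Lie
subalgebra `k ⊆ g`. -/
noncomputable def uealOfSubalgebra {F : Type*} [Field F] {g : Type*} [LieRing g]
    [LieAlgebra F g] (k : LieSubalgebra F g) :
    UniversalEnvelopingAlgebra F k →ₐ[F] UniversalEnvelopingAlgebra F g :=
  UniversalEnvelopingAlgebra.lift F
    ((UniversalEnvelopingAlgebra.ι F).comp k.incl)

/-!
Let `U_{<n}` be the span of the products of fewer than `n` generators `ι x`. Since
`ι x * ι y - ι y * ι x = ι ⁅x, y⁆`, reordering the factors of a product of `n` generators changes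
it only modulo `U_{<n}`. Expanding each generator along `g = g₊ ⊕ g₀ ⊕ g₋` writes a product of
`n` generators as a sum of products of generators from `g₊ ∪ g₀ ∪ g₋`; sorting the factors of
each into a `g₊`-block, a `g₀`-block and a `g₋`-block lands in `U(g₊) · U(g₀) · U(g₋)`, and the
error terms lie there by induction on `n`.
-/

open Submodule

theorem List.exists_perm_append_append {α : Type*} {s t u : Set α} (l : List α)
    (hl : ∀ x ∈ l, x ∈ s ∪ t ∪ u) :
    ∃ a b c : List α, l.Perm (a ++ b ++ c) ∧
      (∀ x ∈ a, x ∈ s) ∧ (∀ x ∈ b, x ∈ t) ∧ (∀ x ∈ c, x ∈ u) := by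
  induction l with
  | nil => exact ⟨[], [], [], by simp⟩
  | cons x l ih =>
    obtain ⟨a, b, c, hperm, ha, hb, hc⟩ := ih fun y hy => hl y (mem_cons_of_mem x hy)
    rcases hl x mem_cons_self with (hx | hx) | hx
    · exact ⟨x :: a, b, c, hperm.cons x, forall_mem_cons.2 ⟨hx, ha⟩, hb, hc⟩
    · refine ⟨a, x :: b, c, (hperm.cons x).trans ?_, ha, forall_mem_cons.2 ⟨hx, hb⟩, hc⟩
      simpa using (perm_middle (l₁ := a) (l₂ := b ++ c)).symm
    · refine ⟨a, b, x :: c, (hperm.cons x).trans perm_middle.symm, ha, hb,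
        forall_mem_cons.2 ⟨hx, hc⟩⟩

namespace UniversalEnvelopingAlgebra

variable (R : Type*) [CommRing R] {L : Type*} [LieRing L] [LieAlgebra R L]

def monomial (l : List L) : UniversalEnvelopingAlgebra R L :=
  (l.map (ι R)).prod

@[simp]
lemma monomial_nil : monomial R ([] : List L) = 1 := rfl

@[simp]
lemma monomial_cons (x : L) (l : List L) : monomial R (x :: l) = ι R x * monomial R l := by
  simp [monomial]

@[simp]
lemma monomial_append (l₁ l₂ : List L) :
    monomial R (l₁ ++ l₂) = monomial R l₁ * monomial R l₂ := by
  simp [monomial]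

lemma adjoin_range_ι :
    Algebra.adjoin R (Set.range (ι R : L → UniversalEnvelopingAlgebra R L)) = ⊤ := by
  have : Set.range (ι R : L → UniversalEnvelopingAlgebra R L) =
      mkAlgHom R L '' Set.range (TensorAlgebra.ι R) := by
    rw [← Set.range_comp]; rfl
  rw [this, Algebra.adjoin_image, TensorAlgebra.adjoin_range_ι, Algebra.map_top,
    AlgHom.range_eq_top]
  exact RingCon.mkₐ_surjective _

lemma span_range_monomial :
    span R (Set.range (monomial R : List L → UniversalEnvelopingAlgebra R L)) = ⊤ := by
  rw [eq_top_iff, ← Algebra.toSubmodule_eq_top.2 (adjoin_range_ι R), Algebra.adjoin_eq_span]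
  refine span_mono fun u hu => ?_
  induction hu using Submonoid.closure_induction with
  | mem _ hu => obtain ⟨x, rfl⟩ := hu; exact ⟨[x], by simp⟩
  | one => exact ⟨[], rfl⟩
  | mul _ _ _ _ hu hv =>
    obtain ⟨l₁, rfl⟩ := hu; obtain ⟨l₂, rfl⟩ := hv; exact ⟨l₁ ++ l₂, monomial_append R l₁ l₂⟩

variable (L) in
def degreeLT (n : ℕ) : Submodule R (UniversalEnvelopingAlgebra R L) :=
  span R (monomial R '' {l | l.length < n})

lemma ι_mul_mem_degreeLT {n : ℕ} (x : L) {u : UniversalEnvelopingAlgebra R L}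
    (hu : u ∈ degreeLT R L n) : ι R x * u ∈ degreeLT R L (n + 1) := by
  have : (degreeLT R L n).map (LinearMap.mulLeft R (ι R x)) ≤ degreeLT R L (n + 1) := by
    rw [degreeLT, map_span, span_le]
    rintro _ ⟨_, ⟨l, hl, rfl⟩, rfl⟩
    exact subset_span ⟨x :: l, by simpa using hl, monomial_cons R x l⟩
  exact this ⟨u, hu, rfl⟩

lemma monomial_sub_monomial_mem_degreeLT {l₁ l₂ : List L} (h : l₁.Perm l₂) :
    monomial R l₁ - monomial R l₂ ∈ degreeLT R L l₁.length := by
  induction h with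
  | nil => simp
  | cons x _ ih => simpa [← mul_sub] using ι_mul_mem_degreeLT R x ih
  | swap x y l =>
    have hlie : ι R y * ι R x - ι R x * ι R y = ι R ⁅y, x⁆ := by
      rw [LieHom.map_lie, Ring.lie_def]
    refine subset_span ⟨⁅y, x⁆ :: l, by simp, ?_⟩
    simp only [monomial_cons, ← mul_assoc, ← sub_mul, hlie]
  | @trans _ l₂ _ h₁ _ ih₁ ih₂ =>
    rw [← sub_add_sub_cancel _ (monomial R l₂)]
    exact add_mem ih₁ (h₁.length_eq ▸ ih₂)

lemma monomial_mem_span_monomial {s : Set L} (hs : span R s = ⊤) (l : List L) :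
    monomial R l ∈ span R (monomial R '' {l' | l'.length = l.length ∧ ∀ x ∈ l', x ∈ s}) := by
  induction l with
  | nil => exact subset_span ⟨[], by simp, rfl⟩
  | cons x l ih =>
    have hx : ι R x ∈ span R (ι R '' s) :=
      apply_mem_span_image_of_mem_span (ι R : L →ₗ⁅R⁆ _).toLinearMap (hs ▸ mem_top)
    have := mul_mem_mul hx ih
    rw [span_mul_span] at this
    refine span_mono ?_ this
    rintro _ ⟨_, ⟨y, hy, rfl⟩, _, ⟨l', ⟨hlen, hl'⟩, rfl⟩, rfl⟩
    exact ⟨y :: l', ⟨by simp [hlen], List.forall_mem_cons.2 ⟨hy, hl'⟩⟩, monomial_cons R y l'⟩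

lemma eq_top_of_forall_exists_perm_monomial_mem {s : Set L} (hs : span R s = ⊤)
    (S : Submodule R (UniversalEnvelopingAlgebra R L))
    (hS : ∀ l : List L, (∀ x ∈ l, x ∈ s) → ∃ l', l'.Perm l ∧ monomial R l' ∈ S) : S = ⊤ := by
  have hmem : ∀ n, ∀ l : List L, l.length = n → monomial R l ∈ S := by
    refine fun n => Nat.strong_induction_on n fun n ih => ?_
    have hlow : degreeLT R L n ≤ S := span_le.2 <| by
      rintro _ ⟨l, hl, rfl⟩
      exact ih _ hl l rfl
    rintro l rfl
    refine span_le.2 ?_ (monomial_mem_span_monomial R hs l)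
    rintro _ ⟨l', ⟨hlen, hl's⟩, rfl⟩
    obtain ⟨l'', hperm, hl''⟩ := hS l' hl's
    have hdiff := hlow (hlen ▸ monomial_sub_monomial_mem_degreeLT R hperm.symm)
    simpa only [sub_add_cancel, SetLike.mem_coe] using add_mem hdiff hl''
  rw [eq_top_iff, ← span_range_monomial R, span_le]
  rintro _ ⟨l, rfl⟩
  exact hmem _ l rfl

lemma monomial_mem_range_uealOfSubalgebra {F : Type*} [Field F] {g : Type*} [LieRing g]
    [LieAlgebra F g] (k : LieSubalgebra F g) {l : List g} (hl : ∀ x ∈ l, x ∈ k) :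
    monomial F l ∈ (uealOfSubalgebra k).range := by
  refine Subalgebra.list_prod_mem _ fun _ hu => ?_
  obtain ⟨x, hx, rfl⟩ := List.mem_map.1 hu
  exact ⟨ι F ⟨x, hl x hx⟩, lift_ι_apply F _ _⟩

end UniversalEnvelopingAlgebra

open UniversalEnvelopingAlgebra in
theorem ueal_triangular_decomposition_general
    {F : Type*} [Field F] {g : Type*} [LieRing g] [LieAlgebra F g]
    (gp g0 gm : LieSubalgebra F g)
    (hdec : DirectSum.IsInternal
      (fun i : Fin 3 => ![gp.toSubmodule, g0.toSubmodule, gm.toSubmodule] i)) :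
    Submodule.span F
      {x : UniversalEnvelopingAlgebra F g |
        ∃ a ∈ Set.range (uealOfSubalgebra gp),
        ∃ b ∈ Set.range (uealOfSubalgebra g0),
        ∃ c ∈ Set.range (uealOfSubalgebra gm),
          x = a * b * c} = ⊤ := by
  have hspan : span F ((gp.toSubmodule : Set g) ∪ g0.toSubmodule ∪ gm.toSubmodule) = ⊤ := by
    rw [span_union, span_union, span_eq, span_eq, span_eq, ← hdec.submodule_iSup_eq_top,
      iSup_fin_three]
    rfl
  refine eq_top_of_forall_exists_perm_monomial_mem F hspan _ fun l hl => ?_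
  obtain ⟨a, b, c, hperm, ha, hb, hc⟩ := l.exists_perm_append_append hl
  refine ⟨a ++ b ++ c, hperm.symm, subset_span ?_⟩
  exact ⟨_, monomial_mem_range_uealOfSubalgebra gp ha, _,
    monomial_mem_range_uealOfSubalgebra g0 hb, _, monomial_mem_range_uealOfSubalgebra gm hc,
    by rw [monomial_append, monomial_append]⟩

/-- Triangular decomposition of the universal enveloping algebra: if
`g = g₊ ⊕ g₀ ⊕ g₋` as vector spaces, with `g₊, g₀, g₋` Lie subalgebras, then
`U(g) = U(g₊) · U(g₀) · U(g₋)`: `U(g)` is spanned by products `a·b·c` with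
`a, b, c` in the images of `U(g₊), U(g₀), U(g₋)` respectively. -/
theorem ueal_triangular_decomposition
    {F : Type*} [Field F] [CharZero F] {g : Type*} [LieRing g] [LieAlgebra F g]
    (gp g0 gm : LieSubalgebra F g)
    (hdec : DirectSum.IsInternal
      (fun i : Fin 3 => ![gp.toSubmodule, g0.toSubmodule, gm.toSubmodule] i)) :
    Submodule.span F
      {x : UniversalEnvelopingAlgebra F g |
        ∃ a ∈ Set.range (uealOfSubalgebra gp),
        ∃ b ∈ Set.range (uealOfSubalgebra g0),
        ∃ c ∈ Set.range (uealOfSubalgebra gm),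
          x = a * b * c} = ⊤ :=
  ueal_triangular_decomposition_general gp g0 gm hdec
end
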